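/- arXiv:1706.00599 — 5 statements merged into one kernel-verified Lean document; each statement's English description precedes it below -/
import Mathlib

section
/- Let c ∈ ℝ and let u : ℝ → ℝ be twice differentiable with u'(θ)² = c·exp(u(θ)) − 2·(1 + u(θ)) and u'(θ) ≠ 0 for every θ ∈ ℝ. Then the function p(θ) := exp(−1 − u(θ)) is everywhere positive and satisfies the score equation p''(θ)/p(θ) − (1/2)·(p'(θ)/p(θ))² = 1 + log p(θ) for every θ ∈ ℝ. -/
open Real

/-- If `u : ℝ → ℝ` is twice differentiable with `u'(θ)² = c·exp(u θ) − 2(1 + u θ)` and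
`u'(θ) ≠ 0` everywhere, then `p(θ) := exp(−1 − u θ)` is positive and satisfies the score
equation `p''/p − (1/2)(p'/p)² = 1 + log p`. -/
theorem stmt_0 (c : ℝ) (u u' u'' : ℝ → ℝ)
    (hu' : ∀ θ : ℝ, HasDerivAt u (u' θ) θ)
    (hu'' : ∀ θ : ℝ, HasDerivAt u' (u'' θ) θ)
    (heq : ∀ θ : ℝ, (u' θ) ^ 2 = c * Real.exp (u θ) - 2 * (1 + u θ))
    (hne : ∀ θ : ℝ, u' θ ≠ 0) :
    (∀ θ : ℝ, 0 < Real.exp (-1 - u θ)) ∧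
    (∀ θ : ℝ,
      deriv (deriv (fun t => Real.exp (-1 - u t))) θ / Real.exp (-1 - u θ)
        - (1 / 2) * (deriv (fun t => Real.exp (-1 - u t)) θ / Real.exp (-1 - u θ)) ^ 2
        = 1 + Real.log (Real.exp (-1 - u θ))) := by
  have hp : ∀ θ : ℝ, HasDerivAt (fun t => Real.exp (-1 - u t))
      (Real.exp (-1 - u θ) * (-(u' θ))) θ := by
    intro θ
    have h1 : HasDerivAt (fun t => -1 - u t) (-(u' θ)) θ := (hu' θ).const_sub (-1)
    exact h1.exp
  have hd1 : deriv (fun t => Real.exp (-1 - u t))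
      = fun θ => Real.exp (-1 - u θ) * (-(u' θ)) := funext fun θ => (hp θ).deriv
  have hp2 : ∀ θ : ℝ, HasDerivAt (fun θ => Real.exp (-1 - u θ) * (-(u' θ)))
      (Real.exp (-1 - u θ) * (-(u' θ)) * (-(u' θ)) + Real.exp (-1 - u θ) * (-(u'' θ))) θ := by
    intro θ
    exact (hp θ).mul (hu'' θ).neg
  -- u'' identity
  have key : ∀ θ : ℝ, u'' θ = u' θ ^ 2 / 2 + u θ := by
    intro θ
    have h1 : HasDerivAt (fun x => u' x ^ 2) (2 * u' θ ^ 1 * u'' θ) θ := (hu'' θ).pow 2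
    have h2 : HasDerivAt (fun x => c * Real.exp (u x) - 2 * (1 + u x))
        (c * (Real.exp (u θ) * u' θ) - 2 * u' θ) θ := by
      have ha := ((hu' θ).exp.const_mul c)
      have hb := ((hu' θ).const_add 1).const_mul 2
      exact ha.sub hb
    have hfun : (fun x => u' x ^ 2) = fun x => c * Real.exp (u x) - 2 * (1 + u x) :=
      funext heq
    rw [hfun] at h1
    have hder : 2 * u' θ ^ 1 * u'' θ = c * (Real.exp (u θ) * u' θ) - 2 * u' θ :=
      h1.unique h2
    have hce : c * Real.exp (u θ) = u' θ ^ 2 + 2 * (1 + u θ) := by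
      have := heq θ; linarith
    rw [pow_one] at hder
    have h3 : 2 * u' θ * u'' θ = 2 * u' θ * (u' θ ^ 2 / 2 + u θ) := by
      linear_combination hder + u' θ * hce
    exact mul_left_cancel₀ (by simpa using hne θ) h3
  refine ⟨fun θ => Real.exp_pos _, fun θ => ?_⟩
  rw [hd1]
  have hd2 : deriv (fun θ => Real.exp (-1 - u θ) * (-(u' θ))) θ
      = Real.exp (-1 - u θ) * (-(u' θ)) * (-(u' θ)) + Real.exp (-1 - u θ) * (-(u'' θ)) :=
    (hp2 θ).deriv
  rw [hd2, Real.log_exp]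
  have hE := Real.exp_ne_zero (-1 - u θ)
  rw [key θ]
  field_simp
  ring
end

section
/- Let I ⊆ ℝ be an open interval and let u : I → ℝ be twice differentiable with u''(θ) = (1/2)·u'(θ)² + u(θ) for all θ ∈ I. Then there exists a constant c ∈ ℝ such that u'(θ)² = c·exp(u(θ)) − 2·(1 + u(θ)) for all θ ∈ I. -/
open Real

/-- First-integral step: if `u` is twice differentiable on an open interval `I` and satisfies
`u'' = (1/2)(u')² + u` on `I`, then there is a constant `c` with
`(u')² = c·exp u − 2(1 + u)` on `I`. -/
theorem stmt_2 (I : Set ℝ) (hI : IsOpen I) (hIconn : IsPreconnected I)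
    (u u' u'' : ℝ → ℝ)
    (hu' : ∀ θ ∈ I, HasDerivAt u (u' θ) θ)
    (hu'' : ∀ θ ∈ I, HasDerivAt u' (u'' θ) θ)
    (heq : ∀ θ ∈ I, u'' θ = (1 / 2) * (u' θ) ^ 2 + u θ) :
    ∃ c : ℝ, ∀ θ ∈ I, (u' θ) ^ 2 = c * Real.exp (u θ) - 2 * (1 + u θ) := by
  rcases Set.eq_empty_or_nonempty I with hE | ⟨θ₀, hθ₀⟩
  · exact ⟨0, by simp [hE]⟩
  set F : ℝ → ℝ := fun θ => ((u' θ) ^ 2 + 2 * u θ + 2) * Real.exp (-(u θ)) with hF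
  have hFderiv : ∀ θ ∈ I, HasDerivAt F 0 θ := by
    intro θ hθ
    have h1 : HasDerivAt (fun θ => (u' θ) ^ 2 + 2 * u θ + 2)
        (2 * u' θ * u'' θ + 2 * u' θ) θ := by
      have := (((hu'' θ hθ).pow 2).add (((hu' θ hθ)).const_mul 2)).add_const 2
      exact this.congr_deriv (by ring)
    have h2 : HasDerivAt (fun θ => Real.exp (-(u θ)))
        (Real.exp (-(u θ)) * (-(u' θ))) θ := ((hu' θ hθ).neg).exp
    have := h1.mul h2
    exact this.congr_deriv (by rw [heq θ hθ]; ring)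
  have hconv : Convex ℝ I := hIconn.convex
  have hconst : ∀ θ ∈ I, F θ = F θ₀ := by
    intro θ hθ
    apply hconv.is_const_of_fderivWithin_eq_zero (𝕜 := ℝ)
      (f := F) ?_ ?_ hθ hθ₀
    · intro x hx
      exact ((hFderiv x hx).differentiableAt).differentiableWithinAt
    · intro x hx
      have h0 : fderivWithin ℝ F I x = ContinuousLinearMap.smulRight (1 : ℝ →L[ℝ] ℝ) (0 : ℝ) :=
        ((hFderiv x hx).hasFDerivAt.hasFDerivWithinAt).fderivWithin (hI.uniqueDiffOn x hx)
      rw [h0]; ext; simp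
  refine ⟨F θ₀, fun θ hθ => ?_⟩
  have h := hconst θ hθ
  have hexp : Real.exp (-(u θ)) * Real.exp (u θ) = 1 := by
    rw [← Real.exp_add]; simp
  have : ((u' θ) ^ 2 + 2 * u θ + 2) * Real.exp (-(u θ)) * Real.exp (u θ)
      = F θ₀ * Real.exp (u θ) := by rw [← h]
  rw [mul_assoc, hexp, mul_one] at this
  linarith
end

section
/- The function L : ℝ × ℝ → ℝ given by L(p, q) = (1/2)·q²/p + p·log p is strictly convex on the convex set (0, ∞) × ℝ. -/
open Real

/-- The Lagrangian `L(p, q) = (1/2)·q²/p + p·log p` is strictly convex on `(0, ∞) × ℝ`. -/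
theorem stmt_6 :
    StrictConvexOn ℝ (Set.Ioi (0 : ℝ) ×ˢ (Set.univ : Set ℝ))
      (fun x : ℝ × ℝ => (1 / 2) * x.2 ^ 2 / x.1 + x.1 * Real.log x.1) := by
  refine ⟨(convex_Ioi 0).prod convex_univ, ?_⟩
  rintro ⟨p₁, q₁⟩ hx ⟨p₂, q₂⟩ hy hxy a b ha hb hab
  have hp₁ : (0 : ℝ) < p₁ := hx.1
  have hp₂ : (0 : ℝ) < p₂ := hy.1
  simp only [Prod.smul_mk, Prod.mk_add_mk, smul_eq_mul]
  have hp : 0 < a * p₁ + b * p₂ := by positivity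
  by_cases hpe : p₁ = p₂
  · -- first coordinates equal, so q₁ ≠ q₂ and the quadratic term is strict
    subst hpe
    have hq : q₁ ≠ q₂ := by
      intro h
      exact hxy (by simp [h])
    have hpp : a * p₁ + b * p₁ = p₁ := by
      have : a * p₁ + b * p₁ = (a + b) * p₁ := by ring
      rw [this, hab, one_mul]
    rw [hpp]
    have hq2 : 0 < (q₁ - q₂) ^ 2 := by
      have h := sub_ne_zero.mpr hq
      positivity
    have key : (1 / 2) * (a * q₁ + b * q₂) ^ 2 < a * ((1 / 2) * q₁ ^ 2) + b * ((1 / 2) * q₂ ^ 2) := by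
      nlinarith [mul_pos ha hb, mul_pos (mul_pos ha hb) hq2]
    have h1 : (1 / 2) * (a * q₁ + b * q₂) ^ 2 / p₁
        < (a * ((1 / 2) * q₁ ^ 2) + b * ((1 / 2) * q₂ ^ 2)) / p₁ := by gcongr
    have h2 : (a * ((1 / 2) * q₁ ^ 2) + b * ((1 / 2) * q₂ ^ 2)) / p₁
        = a * ((1 / 2) * q₁ ^ 2 / p₁) + b * ((1 / 2) * q₂ ^ 2 / p₁) := by ring
    have h3 : p₁ * Real.log p₁ = a * (p₁ * Real.log p₁) + b * (p₁ * Real.log p₁) := by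
      have : a * (p₁ * Real.log p₁) + b * (p₁ * Real.log p₁)
          = (a + b) * (p₁ * Real.log p₁) := by ring
      rw [this, hab, one_mul]
    linarith [h1, h2.le]
  · -- first coordinates differ: entropy term is strict, quadratic term convex
    have hlog : (a * p₁ + b * p₂) * Real.log (a * p₁ + b * p₂)
        < a * (p₁ * Real.log p₁) + b * (p₂ * Real.log p₂) := by
      have := Real.strictConvexOn_mul_log.2 (Set.mem_Ici.2 hp₁.le) (Set.mem_Ici.2 hp₂.le)
        hpe ha hb hab
      simpa [smul_eq_mul] using this
    have hquad : (1 / 2) * (a * q₁ + b * q₂) ^ 2 / (a * p₁ + b * p₂)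
        ≤ a * ((1 / 2) * q₁ ^ 2 / p₁) + b * ((1 / 2) * q₂ ^ 2 / p₂) := by
      have h2 : a * ((1 / 2) * q₁ ^ 2 / p₁) + b * ((1 / 2) * q₂ ^ 2 / p₂)
          = (a * (q₁ ^ 2 * p₂) + b * (q₂ ^ 2 * p₁)) / (2 * (p₁ * p₂)) := by
        field_simp
      rw [h2, div_le_div_iff₀ hp (by positivity)]
      nlinarith [sq_nonneg (p₁ * q₂ - p₂ * q₁), mul_pos ha hb, mul_pos hp₁ hp₂]
    linarith
end

section
/- Let σ > 0, let n be a positive integer, let μ ∈ ℝ, and let X be distributed according to the Gaussian measure N(μ, σ²/n) on ℝ. Then P( |X| ≥ |μ| ) = 1/2 + Φ( −2·|μ|·√n / σ ), and in particular P( |X| ≥ |μ| ) > 1/2. -/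
open Real MeasureTheory ProbabilityTheory

lemma aux_cdf (a : ℝ) : gaussianReal 0 1 (Set.Iic a)
    = ENNReal.ofReal (∫ s in Set.Iic a, (Real.sqrt (2 * Real.pi))⁻¹ * Real.exp (-s ^ 2 / 2)) := by
  rw [gaussianReal_apply_eq_integral 0 one_ne_zero]
  congr 1
  refine setIntegral_congr_fun measurableSet_Iic (fun x _ => ?_)
  simp [gaussianPDFReal, neg_div]

lemma aux_neg : (gaussianReal 0 1).map (fun x : ℝ => -x) = gaussianReal 0 1 := by
  have h := gaussianReal_map_const_mul (μ := 0) (v := 1) (-1)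
  have h2 : (fun x : ℝ => -1 * x) = fun x : ℝ => -x := by ext x; ring
  rw [h2] at h
  rw [h]
  norm_num

lemma aux_Ici (a : ℝ) : gaussianReal 0 1 (Set.Ici a) = gaussianReal 0 1 (Set.Iic (-a)) := by
  conv_lhs => rw [← aux_neg]
  rw [Measure.map_apply measurable_neg measurableSet_Ici]
  congr 1
  ext x
  simp [le_neg]

lemma aux_half : gaussianReal 0 1 (Set.Iic (0:ℝ)) = 1/2 := by
  have hsing : gaussianReal 0 1 ({0} : Set ℝ) = 0 :=
    gaussianReal_absolutelyContinuous 0 one_ne_zero (by simp)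
  have h := measure_union_add_inter (μ := gaussianReal 0 1) (t := Set.Ici (0:ℝ))
    (Set.Iic (0:ℝ)) measurableSet_Ici
  have hu : Set.Iic (0:ℝ) ∪ Set.Ici 0 = Set.univ := Set.Iic_union_Ici
  have hi : Set.Iic (0:ℝ) ∩ Set.Ici 0 = {0} := by
    rw [Set.inter_comm, Set.Ici_inter_Iic, Set.Icc_self]
  rw [hu, hi, hsing, add_zero, measure_univ, aux_Ici, neg_zero] at h
  have h2 : (2:ENNReal) * gaussianReal 0 1 (Set.Iic (0:ℝ)) = 1 := by
    rw [two_mul]; exact h.symm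
  rw [ENNReal.eq_div_iff (by norm_num) (by norm_num)]
  exact h2

lemma aux_map (s m : ℝ) :
    (gaussianReal 0 1).map (fun z => s * z + m) = gaussianReal m ⟨s ^ 2, sq_nonneg s⟩ := by
  have : (fun z : ℝ => s * z + m) = (· + m) ∘ (s * ·) := rfl
  rw [this, ← Measure.map_map (measurable_add_const m) (measurable_const_mul s),
    gaussianReal_map_const_mul, gaussianReal_map_add_const]
  norm_num
  rfl

/-- If `X ~ N(μ, σ²/n)` with `σ > 0` and `n ≥ 1`, then
`P(|X| ≥ |μ|) = 1/2 + Φ(−2|μ|√n/σ)`, where `Φ` is the standard normal CDF;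
in particular this probability exceeds `1/2`. -/
theorem stmt_16 (σ : ℝ) (hσ : 0 < σ) (n : ℕ) (hn : 0 < n) (μ : ℝ) :
    (gaussianReal μ ⟨σ ^ 2 / n, by positivity⟩) {x : ℝ | |μ| ≤ |x|}
      = ENNReal.ofReal (1 / 2 +
          ∫ s in Set.Iic (-2 * |μ| * Real.sqrt n / σ),
            (Real.sqrt (2 * Real.pi))⁻¹ * Real.exp (-s ^ 2 / 2)) ∧
    ENNReal.ofReal (1 / 2)
      < (gaussianReal μ ⟨σ ^ 2 / n, by positivity⟩) {x : ℝ | |μ| ≤ |x|} := by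
  have hn' : (0:ℝ) < n := by exact_mod_cast hn
  have hsn : (0:ℝ) < Real.sqrt n := Real.sqrt_pos.2 hn'
  set s : ℝ := σ / Real.sqrt n with hs_def
  have hs : 0 < s := div_pos hσ hsn
  set c : ℝ := -2 * |μ| * Real.sqrt n / σ with hc_def
  -- the variance
  have hv : (⟨σ ^ 2 / n, by positivity⟩ : NNReal) = ⟨s ^ 2, sq_nonneg s⟩ := by
    ext
    simp only [NNReal.coe_mk, hs_def, div_pow, Real.sq_sqrt (le_of_lt hn')]
  set G := gaussianReal μ (⟨σ ^ 2 / n, by positivity⟩ : NNReal) with hG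
  have hmap : G = (gaussianReal 0 1).map (fun z => s * z + μ) := by
    rw [hG, hv, aux_map]
  have hmeas : Measurable (fun z : ℝ => s * z + μ) :=
    (measurable_const_mul s).add_const μ
  -- G of Iic / Ici
  have hIic : ∀ t : ℝ, G (Set.Iic t) = gaussianReal 0 1 (Set.Iic ((t - μ) / s)) := by
    intro t
    rw [hmap, Measure.map_apply hmeas measurableSet_Iic]
    congr 1
    ext z
    simp only [Set.mem_preimage, Set.mem_Iic]
    rw [le_div_iff₀ hs, mul_comm]
    constructor <;> intro h <;> linarith
  have hIci : ∀ t : ℝ, G (Set.Ici t) = gaussianReal 0 1 (Set.Iic (-((t - μ) / s))) := by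
    intro t
    rw [hmap, Measure.map_apply hmeas measurableSet_Ici]
    rw [← aux_Ici]
    congr 1
    ext z
    simp only [Set.mem_preimage, Set.mem_Ici]
    rw [div_le_iff₀ hs, mul_comm]
    constructor <;> intro h <;> linarith
  -- split the event
  have hE : {x : ℝ | |μ| ≤ |x|} = Set.Iic (-|μ|) ∪ Set.Ici |μ| := by
    ext x
    simp only [Set.mem_setOf_eq, Set.mem_union, Set.mem_Iic, Set.mem_Ici, le_abs, le_neg]
    tauto
  have hinter : G (Set.Iic (-|μ|) ∩ Set.Ici |μ|) = 0 := by
    have hsub : Set.Iic (-|μ|) ∩ Set.Ici |μ| ⊆ ({0} : Set ℝ) := by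
      intro x ⟨h1, h2⟩
      simp only [Set.mem_Iic] at h1
      simp only [Set.mem_Ici] at h2
      have h0 := abs_nonneg μ
      have : x = 0 := le_antisymm (by linarith) (by linarith)
      simp [this]
    refine measure_mono_null hsub ?_
    rw [hG, hv]
    refine gaussianReal_absolutelyContinuous μ ?_ (by simp)
    intro h0
    have := congrArg NNReal.toReal h0
    simp only [NNReal.coe_zero] at this
    exact absurd this (ne_of_gt (pow_pos hs 2))
  have hsplit : G {x : ℝ | |μ| ≤ |x|} = G (Set.Iic (-|μ|)) + G (Set.Ici |μ|) := by
    rw [hE, ← measure_union_add_inter (Set.Iic (-|μ|)) measurableSet_Ici, hinter, add_zero]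
  -- compute the two pieces
  have hkey : G {x : ℝ | |μ| ≤ |x|} = 1/2 + gaussianReal 0 1 (Set.Iic c) := by
    rw [hsplit, hIic, hIci]
    have hc' : c = (-2 * |μ|) / s := by
      rw [hc_def, hs_def]
      field_simp
    rcases le_or_gt 0 μ with h | h
    · have habs : |μ| = μ := abs_of_nonneg h
      have e1 : (-|μ| - μ) / s = c := by rw [hc', habs]; ring
      have e2 : -((|μ| - μ) / s) = 0 := by rw [habs]; simp
      rw [e1, e2, aux_half, add_comm]
    · have habs : |μ| = -μ := abs_of_neg h
      have e1 : (-|μ| - μ) / s = 0 := by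
        have : -|μ| - μ = 0 := by rw [habs]; ring
        rw [this, zero_div]
      have e2 : -((|μ| - μ) / s) = c := by rw [hc', habs]; ring
      rw [e1, e2, aux_half]
  have hI0 : 0 ≤ ∫ t in Set.Iic c, (Real.sqrt (2 * Real.pi))⁻¹ * Real.exp (-t ^ 2 / 2) :=
    setIntegral_nonneg measurableSet_Iic (fun x _ => by positivity)
  have hIpos : 0 < ∫ t in Set.Iic c, (Real.sqrt (2 * Real.pi))⁻¹ * Real.exp (-t ^ 2 / 2) := by
    rcases lt_or_eq_of_le hI0 with h | h
    · exact h
    · exfalso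
      have hne : gaussianReal 0 1 (Set.Iic c) ≠ 0 := by
        intro h0
        have := gaussianReal_absolutelyContinuous' 0 one_ne_zero h0
        rw [Real.volume_Iic] at this
        exact ENNReal.top_ne_zero this
      rw [aux_cdf, ← h] at hne
      simp at hne
  have hhalf : (1/2 : ENNReal) = ENNReal.ofReal (1/2) := by
    rw [ENNReal.ofReal_div_of_pos (by norm_num)]
    norm_num
  constructor
  · rw [hkey, aux_cdf, hhalf, ← ENNReal.ofReal_add (by norm_num) hI0]
  · rw [hkey, hhalf]
    refine ENNReal.lt_add_right (by simp) ?_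
    rw [aux_cdf]
    intro h0
    rw [ENNReal.ofReal_eq_zero] at h0
    exact absurd h0 (not_le.mpr hIpos)
end

section
/- Let σ > 0, let n be a positive integer, let m ∈ ℝ, and let Y be distributed according to the Gaussian measure N(m, σ²/n) on ℝ. Then P( |Y| ≤ |m| ) = 1/2 − Φ( −2·|m|·√n / σ ), and in particular P( |Y| ≤ |m| ) < 1/2. -/
open Real MeasureTheory ProbabilityTheory

section StdPdfHelpers

open Set

noncomputable def stdPdf : ℝ → ℝ := fun s => (Real.sqrt (2 * Real.pi))⁻¹ * Real.exp (-s ^ 2 / 2)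

lemma stdPdf_eq : gaussianPDFReal 0 1 = stdPdf := by
  ext x
  simp [gaussianPDFReal, stdPdf]

lemma stdPdf_pos (x : ℝ) : 0 < stdPdf x := by
  rw [← stdPdf_eq]; exact gaussianPDFReal_pos 0 1 x one_ne_zero

lemma stdPdf_int : Integrable stdPdf := by
  rw [← stdPdf_eq]; exact integrable_gaussianPDFReal 0 1

lemma stdPdf_total : ∫ x, stdPdf x = 1 := by
  rw [← stdPdf_eq]; exact integral_gaussianPDFReal_eq_one 0 one_ne_zero

lemma stdPdf_neg : (fun x => stdPdf (-x)) = stdPdf := by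
  ext x; simp [stdPdf, neg_sq]

lemma stdPdf_Iic_neg (t : ℝ) : ∫ x in Iic (-t), stdPdf x = ∫ x in Ioi t, stdPdf x := by
  rw [← integral_comp_neg_Ioi]
  simp_rw [show ∀ x:ℝ, stdPdf (-x) = stdPdf x from fun x => congrFun stdPdf_neg x]

lemma stdPdf_split (t : ℝ) : (∫ x in Iic t, stdPdf x) + ∫ x in Ioi t, stdPdf x = 1 := by
  rw [← setIntegral_union (Iic_disjoint_Ioi le_rfl) measurableSet_Ioi
    stdPdf_int.integrableOn stdPdf_int.integrableOn, Iic_union_Ioi,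
    Measure.restrict_univ, stdPdf_total]

lemma stdPdf_half : ∫ x in Iic 0, stdPdf x = 1 / 2 := by
  have h := stdPdf_split 0
  rw [← stdPdf_Iic_neg 0] at h
  simp only [neg_zero] at h
  linarith

lemma stdPdf_Icc (a b : ℝ) (h : a ≤ b) :
    ∫ x in Icc a b, stdPdf x = (∫ x in Iic b, stdPdf x) - ∫ x in Iic a, stdPdf x := by
  rw [integral_Icc_eq_integral_Ioc, ← Iic_union_Ioc_eq_Iic h,
    setIntegral_union (Iic_disjoint_Ioc le_rfl) measurableSet_Ioc
      stdPdf_int.integrableOn stdPdf_int.integrableOn]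
  ring

lemma stdPdf_Iic_pos (t : ℝ) : 0 < ∫ x in Iic t, stdPdf x := by
  rw [setIntegral_pos_iff_support_of_nonneg_ae
    (ae_of_all _ fun x => (stdPdf_pos x).le) stdPdf_int.integrableOn]
  have hsupp : Function.support stdPdf = univ :=
    Set.eq_univ_of_forall fun x => (stdPdf_pos x).ne'
  rw [hsupp, univ_inter, Real.volume_Iic]
  exact ENNReal.zero_lt_top

lemma gaussian_abs_le (σ : ℝ) (hσ : 0 < σ) (n : ℕ) (hn : 0 < n) (m : ℝ) :
    (gaussianReal m ⟨σ ^ 2 / n, by positivity⟩) {y : ℝ | |y| ≤ |m|}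
      = ENNReal.ofReal (1 / 2 -
          ∫ s in Set.Iic (-2 * |m| * Real.sqrt n / σ),
            (Real.sqrt (2 * Real.pi))⁻¹ * Real.exp (-s ^ 2 / 2)) := by
  set v : NNReal := ⟨σ ^ 2 / n, by positivity⟩ with hv
  have hn' : (0:ℝ) < n := Nat.cast_pos.mpr hn
  set c : ℝ := Real.sqrt n / σ with hc
  have hcpos : 0 < c := by positivity
  have hmap : (gaussianReal m v).map (fun y => c * (y + -m)) = gaussianReal 0 1 := by
    have h1 : (gaussianReal m v).map (· + -m) = gaussianReal 0 v := by
      rw [gaussianReal_map_add_const]; simp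
    have h2 : (fun y => c * (y + -m)) = (c * ·) ∘ (· + -m) := rfl
    rw [h2, ← Measure.map_map (measurable_const_mul c) (measurable_add_const (-m)), h1,
      gaussianReal_map_const_mul]
    congr 1
    · simp
    · ext
      push_cast
      simp only [hc, hv]
      rw [div_pow, Real.sq_sqrt hn'.le]
      field_simp
      show (n:ℝ) * (σ ^ 2 / n) = σ ^ 2
      field_simp
  have hfmeas : Measurable (fun y : ℝ => c * (y + -m)) :=
    (measurable_add_const (-m)).const_mul c
  set a : ℝ := c * (-|m| + -m) with ha
  set b : ℝ := c * (|m| + -m) with hb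
  have hab : a ≤ b := by
    apply mul_le_mul_of_nonneg_left _ hcpos.le
    have := abs_nonneg m; linarith
  have hpre : (fun y : ℝ => c * (y + -m)) ⁻¹' (Icc a b) = {y : ℝ | |y| ≤ |m|} := by
    ext y
    simp only [mem_preimage, mem_Icc, mem_setOf_eq, abs_le, ha, hb]
    rw [mul_le_mul_iff_right₀ hcpos, mul_le_mul_iff_right₀ hcpos]
    constructor <;> rintro ⟨h1, h2⟩ <;> constructor <;> linarith
  have hset : (gaussianReal m v) {y : ℝ | |y| ≤ |m|} = gaussianReal 0 1 (Icc a b) := by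
    rw [← hmap, Measure.map_apply hfmeas measurableSet_Icc, hpre]
  rw [hset, gaussianReal_apply_eq_integral 0 one_ne_zero, stdPdf_eq]
  have hIcc := stdPdf_Icc a b hab
  have hkey : -2 * |m| * Real.sqrt n / σ = -(2 * c * |m|) := by
    rw [hc]; ring
  rw [hkey]
  have hgoal : ∫ x in Icc a b, stdPdf x
      = 1 / 2 - ∫ s in Iic (-(2 * c * |m|)), stdPdf s := by
    rcases le_or_gt 0 m with hm | hm
    · have habs : |m| = m := abs_of_nonneg hm
      have ha' : a = -(2 * c * |m|) := by rw [ha, habs]; ring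
      have hb' : b = 0 := by rw [hb, habs]; ring
      rw [hIcc, ha', hb', stdPdf_half]
    · have habs : |m| = -m := abs_of_neg hm
      have ha' : a = 0 := by rw [ha, habs]; ring
      have hb' : b = 2 * c * |m| := by rw [hb, habs]; ring
      rw [hIcc, ha', hb', stdPdf_half]
      have h1 := stdPdf_split (2 * c * |m|)
      have h2 := stdPdf_Iic_neg (2 * c * |m|)
      linarith
  rw [hgoal]
  rfl

end StdPdfHelpers

/-- If `Y ~ N(m, σ²/n)` with `σ > 0` and `n ≥ 1`, then
`P(|Y| ≤ |m|) = 1/2 − Φ(−2|m|√n/σ)`, where `Φ` is the standard normal CDF;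
in particular this probability is below `1/2`. -/
theorem stmt_17 (σ : ℝ) (hσ : 0 < σ) (n : ℕ) (hn : 0 < n) (m : ℝ) :
    (gaussianReal m ⟨σ ^ 2 / n, by positivity⟩) {y : ℝ | |y| ≤ |m|}
      = ENNReal.ofReal (1 / 2 -
          ∫ s in Set.Iic (-2 * |m| * Real.sqrt n / σ),
            (Real.sqrt (2 * Real.pi))⁻¹ * Real.exp (-s ^ 2 / 2)) ∧
    (gaussianReal m ⟨σ ^ 2 / n, by positivity⟩) {y : ℝ | |y| ≤ |m|}
      < ENNReal.ofReal (1 / 2) := by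
  have heq := gaussian_abs_le σ hσ n hn m
  refine ⟨heq, ?_⟩
  rw [heq]
  rw [ENNReal.ofReal_lt_ofReal_iff (by norm_num)]
  have hpos : 0 < ∫ s in Set.Iic (-2 * |m| * Real.sqrt n / σ), stdPdf s :=
    stdPdf_Iic_pos _
  simp only [stdPdf] at hpos
  linarith
end
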